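/- arXiv:2501.05352 — 4 statements merged into one kernel-verified Lean document; each statement's English description precedes it below -/
import Mathlib

section
/- Let Θ be an nr × nr positive definite Hermitian matrix (indexed by pairs (i,α)) with spectral decomposition Θ^{iα, jβ} = Σₐ γₐ^{jβ} Λₐ⁻¹ conj(γₐ^{iα}), where {γₐ} is a unitary system and Λₐ > 0. Then for any n×n complex matrix x = (x_{kj̄}), the quantity Σ_{α,β,i,j,k,l} Θ^{iα,jβ} Θ^{kβ,lα} x_{kj̄} conj(x_{lī}) is a nonnegative real number. -/
open Matrix
open scoped ComplexOrder

/-- For `Θ` positive definite Hermitian indexed by pairs `(i,α)` and any `n × n` complex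
matrix `x`, the contraction `∑ Θ^{iα,jβ} Θ^{kβ,lα} x_{k j̄} conj (x_{l ī})` is a
nonnegative real number. -/
theorem mixed_contraction_nonneg {n r : ℕ}
    (Θ : Matrix (Fin n × Fin r) (Fin n × Fin r) ℂ) (hΘ : Θ.PosDef)
    (x : Matrix (Fin n) (Fin n) ℂ) :
    (∑ α : Fin r, ∑ β : Fin r, ∑ i : Fin n, ∑ j : Fin n, ∑ k : Fin n, ∑ l : Fin n,
        Θ⁻¹ (i, α) (j, β) * Θ⁻¹ (k, β) (l, α) * x k j * star (x l i)).im = 0 ∧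
    0 ≤ (∑ α : Fin r, ∑ β : Fin r, ∑ i : Fin n, ∑ j : Fin n, ∑ k : Fin n, ∑ l : Fin n,
        Θ⁻¹ (i, α) (j, β) * Θ⁻¹ (k, β) (l, α) * x k j * star (x l i)).re := by
  set A : Matrix (Fin n × Fin r) (Fin n × Fin r) ℂ := Θ⁻¹ with hA
  have hApd : A.PosDef := hΘ.inv
  set Y : Matrix (Fin n × Fin r) (Fin n × Fin r) ℂ :=
    Matrix.of fun p q : Fin n × Fin r => if p.2 = q.2 then x q.1 p.1 else 0 with hY
  -- Step 1: the big sum equals a trace.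
  have key : (∑ α : Fin r, ∑ β : Fin r, ∑ i : Fin n, ∑ j : Fin n, ∑ k : Fin n, ∑ l : Fin n,
      A (i, α) (j, β) * A (k, β) (l, α) * x k j * star (x l i)) =
      (A * Y * A * Yᴴ).trace := by
    simp only [trace, diag_apply, mul_apply, conjTranspose_apply, hY, of_apply,
      Fintype.sum_prod_type, apply_ite (star : ℂ → ℂ), star_zero, mul_ite, mul_zero,
      ite_mul, zero_mul, Finset.sum_ite_eq, Finset.sum_ite_eq', Finset.mem_univ, if_true,
      Finset.mul_sum, Finset.sum_mul]
    -- RHS order: [i, α, l, k, β, j]; LHS: [α, β, i, j, k, l]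
    conv_rhs => rw [Finset.sum_comm]
    conv_rhs => enter [2, α, 2, i, 2, l]; rw [Finset.sum_comm]
    conv_rhs => enter [2, α, 2, i]; rw [Finset.sum_comm]
    conv_rhs => enter [2, α]; rw [Finset.sum_comm]
    conv_rhs => enter [2, α, 2, β, 2, i]; rw [Finset.sum_comm]
    conv_rhs => enter [2, α, 2, β, 2, i, 2, k]; rw [Finset.sum_comm]
    conv_rhs => enter [2, α, 2, β, 2, i]; rw [Finset.sum_comm]
    refine Finset.sum_congr rfl fun α _ => Finset.sum_congr rfl fun β _ => Finset.sum_congr rfl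
      fun i _ => Finset.sum_congr rfl fun j _ => Finset.sum_congr rfl fun k _ =>
      Finset.sum_congr rfl fun l _ => by ring
  -- Step 2: the trace is nonnegative (in the complex order).
  obtain ⟨B, hB⟩ : ∃ B : Matrix (Fin n × Fin r) (Fin n × Fin r) ℂ, A = Bᴴ * B := by
    open scoped MatrixOrder Matrix.Norms.L2Operator in
    obtain ⟨B, hB⟩ := CStarAlgebra.nonneg_iff_eq_star_mul_self.mp hApd.posSemidef.nonneg
    exact ⟨B, hB⟩
  have htr : (A * Y * A * Yᴴ).trace = ((B * Y * Bᴴ) * (B * Y * Bᴴ)ᴴ).trace := by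
    rw [hB]
    rw [show Bᴴ * B * Y * (Bᴴ * B) * Yᴴ = Bᴴ * (B * Y * Bᴴ * B * Yᴴ) by
      simp only [Matrix.mul_assoc]]
    rw [Matrix.trace_mul_comm]
    congr 1
    simp only [conjTranspose_mul, conjTranspose_conjTranspose, Matrix.mul_assoc]
  have hnn : 0 ≤ (A * Y * A * Yᴴ).trace := by
    rw [htr]
    set C := B * Y * Bᴴ
    have : (C * Cᴴ).trace = ∑ p, ∑ q, C p q * star (C p q) := by
      simp [trace, mul_apply, conjTranspose_apply]
    rw [this]
    exact Finset.sum_nonneg fun p _ => Finset.sum_nonneg fun q _ => mul_star_self_nonneg _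
  rw [key]
  rw [Complex.le_def] at hnn
  exact ⟨hnn.2.symm, hnn.1⟩
end

section
/- Let v be a real-valued C² function on an open set of Cⁿ ≅ ℝ^{2n} such that the real Hessian D²v is positive semidefinite at a point x. Then det(D²v)(x) ≤ 2^{2n} (det(v_{ij̄})(x))², where (v_{ij̄}) is the complex Hessian. -/
open Matrix
open scoped ComplexOrder

variable {n : ℕ}


lemma prod_sqrt_eq_one {m : Type*} [Fintype m] {f : m → ℝ} (hf : ∀ i, 0 ≤ f i)
    (hp : ∏ i, f i = 1) : ∏ i, Real.sqrt (f i) = 1 := by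
  have h0 : 0 ≤ ∏ i, Real.sqrt (f i) := Finset.prod_nonneg fun i _ => Real.sqrt_nonneg _
  have hsq : (∏ i, Real.sqrt (f i)) ^ 2 = 1 := by
    rw [← Finset.prod_pow]
    rw [Finset.prod_congr rfl fun i _ => Real.sq_sqrt (hf i), hp]
  calc ∏ i, Real.sqrt (f i) = Real.sqrt ((∏ i, Real.sqrt (f i)) ^ 2) := (Real.sqrt_sq h0).symm
    _ = 1 := by rw [hsq, Real.sqrt_one]

lemma det_one_add_psd {m : Type*} [Fintype m] [DecidableEq m] {M : Matrix m m ℝ}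
    (hM : M.PosSemidef) (hdet : M.det = 1) :
    (2:ℝ) ^ (Fintype.card m) ≤ (1 + M).det := by
  have hMh : M.IsHermitian := hM.isHermitian
  set μ := hMh.eigenvalues with hμ
  have hev : ∀ i, 0 ≤ μ i := hM.eigenvalues_nonneg
  have hprod : ∏ i, μ i = 1 := by
    have h := hMh.det_eq_prod_eigenvalues
    simpa [RCLike.ofReal_real_eq_id] using h.symm.trans hdet
  set U := (Matrix.IsHermitian.eigenvectorUnitary hMh : Matrix m m ℝ) with hU
  have hUU : U * star U = 1 := (Matrix.IsHermitian.eigenvectorUnitary hMh).prop.2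
  have hspec : M = U * diagonal (RCLike.ofReal ∘ μ) * star U := hMh.spectral_theorem
  have h1M : 1 + M = U * (1 + diagonal (RCLike.ofReal ∘ μ)) * star U := by
    rw [Matrix.mul_add, Matrix.add_mul, Matrix.mul_one, hUU, ← hspec]
  have hdet1 : (1 + M).det = ∏ i, (1 + μ i) := by
    rw [h1M, det_mul, det_mul, mul_comm U.det, mul_assoc, ← det_mul, hUU, det_one, mul_one]
    rw [show (1 : Matrix m m ℝ) = diagonal (fun _ => 1) by simp, diagonal_add, det_diagonal]
    simp [RCLike.ofReal_real_eq_id]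
  rw [hdet1]
  calc (2:ℝ) ^ (Fintype.card m) = ∏ _i : m, (2:ℝ) := by simp
    _ = ∏ i, 2 * Real.sqrt (μ i) := by
        rw [Finset.prod_mul_distrib]
        simp [prod_sqrt_eq_one hev hprod]
    _ ≤ ∏ i, (1 + μ i) := by
        apply Finset.prod_le_prod
        · intro i _; positivity
        · intro i _
          nlinarith [sq_nonneg (1 - Real.sqrt (μ i)), Real.sq_sqrt (hev i),
            Real.sqrt_nonneg (μ i)]

lemma det_am_gm {m : Type*} [Fintype m] [DecidableEq m] {H K : Matrix m m ℝ}
    (hH : H.PosSemidef) (hK : K.PosSemidef) (hdet : K.det = H.det) (h0 : H.det ≠ 0) :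
    2 ^ (Fintype.card m) * H.det ≤ (H + K).det := by
  set R := (open scoped MatrixOrder in CFC.sqrt H) with hRdef
  have hR : R.PosSemidef := (open scoped MatrixOrder in (CFC.sqrt_nonneg H).posSemidef)
  have hRR : R * R = H := (open scoped MatrixOrder in CFC.sqrt_mul_sqrt_self H hH.nonneg)
  have hdetR : R.det * R.det = H.det := by rw [← det_mul, hRR]
  have hdR : R.det ≠ 0 := by
    intro h; exact h0 (by rw [← hdetR, h, mul_zero])
  have hHpos : 0 < H.det := by
    rcases (lt_or_gt_of_ne h0) with h | h
    · exfalso; nlinarith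
    · exact h
  have hunit : IsUnit R.det := isUnit_iff_ne_zero.2 hdR
  have hRinv : R * R⁻¹ = 1 := mul_nonsing_inv R hunit
  have hRinv' : R⁻¹ * R = 1 := nonsing_inv_mul R hunit
  have hRherm : Rᴴ = R := hR.isHermitian
  have hRinvH : (R⁻¹)ᴴ = R⁻¹ := by rw [conjTranspose_nonsing_inv, hRherm]
  set M := R⁻¹ * K * R⁻¹ with hMdef
  have hM : M.PosSemidef := by
    have h := hK.conjTranspose_mul_mul_same (R⁻¹)
    rwa [hRinvH] at h
  have hmid : R * (R⁻¹ * K * R⁻¹) * R = K := by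
    rw [show R * (R⁻¹ * K * R⁻¹) * R = (R * R⁻¹) * K * (R⁻¹ * R) by noncomm_ring,
      hRinv, hRinv', one_mul, mul_one]
  have hHK : H + K = R * (1 + M) * R := by
    rw [Matrix.mul_add, Matrix.add_mul, Matrix.mul_one, hRR, hMdef, hmid]
  have hdetM : M.det = 1 := by
    have h : M.det = R.det⁻¹ * K.det * R.det⁻¹ := by
      rw [hMdef, det_mul, det_mul, det_nonsing_inv, Ring.inverse_eq_inv']
    rw [h, hdet, ← hdetR]
    field_simp
  have hkey := det_one_add_psd hM hdetM
  calc 2 ^ (Fintype.card m) * H.det ≤ (1 + M).det * H.det := by nlinarith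
    _ = (H + K).det := by rw [hHK, det_mul, det_mul, ← hdetR]; ring


lemma det_fromBlocks_skew {n : ℕ} (P Q : Matrix (Fin n) (Fin n) ℂ) :
    (fromBlocks P Q (-Q) P).det = (P - Complex.I • Q).det * (P + Complex.I • Q).det := by
  have key : fromBlocks (1 : Matrix (Fin n) (Fin n) ℂ) (Complex.I • 1) 0 1 *
      fromBlocks P Q (-Q) P * fromBlocks (1 : Matrix (Fin n) (Fin n) ℂ) (-(Complex.I • 1)) 0 1 =
      fromBlocks (P - Complex.I • Q) 0 (-Q) (P + Complex.I • Q) := by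
    rw [fromBlocks_multiply, fromBlocks_multiply]
    rw [fromBlocks_inj]
    refine ⟨?_, ?_, ?_, ?_⟩
    · simp [Matrix.smul_mul, sub_eq_add_neg]
    · simp [Matrix.smul_mul, Matrix.mul_smul, smul_smul, Complex.I_mul_I, sub_eq_add_neg]
      abel
    · simp
    · simp [Matrix.smul_mul, Matrix.mul_smul, smul_smul, Complex.I_mul_I, sub_eq_add_neg]
      abel
  have hdetL : (fromBlocks (1 : Matrix (Fin n) (Fin n) ℂ) (Complex.I • 1) 0 (1 : Matrix (Fin n) (Fin n) ℂ)).det = 1 := by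
    simp [det_fromBlocks_zero₂₁]
  have hdetR : (fromBlocks (1 : Matrix (Fin n) (Fin n) ℂ) (-(Complex.I • 1)) 0 (1 : Matrix (Fin n) (Fin n) ℂ)).det = 1 := by
    simp [det_fromBlocks_zero₂₁]
  have := congrArg Matrix.det key
  rw [det_mul, det_mul, hdetL, hdetR, one_mul, mul_one, det_fromBlocks_zero₁₂] at this
  exact this

/-- Second derivative of `v` at `x` in the directions `d`, `e`. -/
noncomputable def secondDeriv (v : EuclideanSpace ℂ (Fin n) → ℝ)
    (x d e : EuclideanSpace ℂ (Fin n)) : ℝ :=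
  fderiv ℝ (fun y => fderiv ℝ v y d) x e

/-- The real coordinate directions of `ℂⁿ ≅ ℝ^{2n}`: `e_i` and `I • e_i`. -/
noncomputable def realDir (a : Fin n ⊕ Fin n) : EuclideanSpace ℂ (Fin n) :=
  Sum.elim (fun i => EuclideanSpace.single i (1 : ℂ))
    (fun i => Complex.I • EuclideanSpace.single i (1 : ℂ)) a

/-- The `2n × 2n` real Hessian of `v` at `x`. -/
noncomputable def realHessian (v : EuclideanSpace ℂ (Fin n) → ℝ)
    (x : EuclideanSpace ℂ (Fin n)) : Matrix (Fin n ⊕ Fin n) (Fin n ⊕ Fin n) ℝ :=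
  Matrix.of fun a b => secondDeriv v x (realDir a) (realDir b)

/-- The `n × n` complex Hessian `v_{i j̄} = ∂²v/∂zⁱ∂z̄ʲ` of `v` at `x`. -/
noncomputable def complexHessian (v : EuclideanSpace ℂ (Fin n) → ℝ)
    (x : EuclideanSpace ℂ (Fin n)) : Matrix (Fin n) (Fin n) ℂ :=
  Matrix.of fun i j =>
    (1 / 4 : ℂ) *
      (((secondDeriv v x (realDir (Sum.inl i)) (realDir (Sum.inl j)) +
          secondDeriv v x (realDir (Sum.inr i)) (realDir (Sum.inr j)) : ℝ) : ℂ) +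
        Complex.I *
          ((secondDeriv v x (realDir (Sum.inl i)) (realDir (Sum.inr j)) -
            secondDeriv v x (realDir (Sum.inr i)) (realDir (Sum.inl j)) : ℝ) : ℂ))

/-- Błocki's comparison: if the real Hessian of a `C²` function `v` is positive
semidefinite at `x`, then `det D²v ≤ 2^{2n} (det v_{i j̄})²`. -/
theorem det_realHessian_le (v : EuclideanSpace ℂ (Fin n) → ℝ) (hv : ContDiff ℝ 2 v)
    (x : EuclideanSpace ℂ (Fin n)) (hpos : (realHessian v x).PosSemidef) :
    (realHessian v x).det ≤ 2 ^ (2 * n) * ((complexHessian v x).det.re) ^ 2 := by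
  classical
  set H := realHessian v x with hHdef
  set C := complexHessian v x with hCdef
  set r := C.det.re with hrdef
  have hsymm : ∀ a b, H a b = H b a := by
    intro a b
    have h := congrFun (congrFun hpos.isHermitian b) a
    simpa [conjTranspose_apply] using h
  set A := H.toBlocks₁₁ with hA
  set E := H.toBlocks₁₂ with hE
  set F := H.toBlocks₂₁ with hF
  set B := H.toBlocks₂₂ with hB
  have hHblocks : H = fromBlocks A E F B := (fromBlocks_toBlocks H).symm
  set J : Matrix (Fin n ⊕ Fin n) (Fin n ⊕ Fin n) ℝ := fromBlocks 0 (-1) 1 0 with hJ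
  set K := Jᴴ * H * J with hKdef
  have hKpos : K.PosSemidef := hpos.conjTranspose_mul_mul_same J
  have hJH : Jᴴ = fromBlocks 0 1 (-1) 0 := by
    rw [hJ, fromBlocks_conjTranspose]
    simp
  have hJJ : Jᴴ * J = 1 := by
    rw [hJH, hJ, fromBlocks_multiply, ← fromBlocks_one]
    simp
  have hdetK : K.det = H.det := by
    rw [hKdef, det_mul, det_mul]
    have h1 : Jᴴ.det * J.det = 1 := by rw [← det_mul, hJJ, det_one]
    calc Jᴴ.det * H.det * J.det = (Jᴴ.det * J.det) * H.det := by ring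
      _ = H.det := by rw [h1, one_mul]
  set P := A + B with hP
  set Q := E - F with hQ
  have hsum : H + K = fromBlocks P Q (-Q) P := by
    have hKval : K = fromBlocks B (-F) (-E) A := by
      rw [hKdef, hJH, hHblocks, hJ, fromBlocks_multiply, fromBlocks_multiply]
      rw [fromBlocks_inj]
      refine ⟨by simp, by simp, by simp, by simp⟩
    rw [hKval, hHblocks, fromBlocks_add, fromBlocks_inj]
    exact ⟨by rw [hP], by rw [hQ]; abel, by rw [hQ]; abel, by rw [hP]; abel⟩
  set Pc := P.map (Complex.ofRealHom) with hPc
  set Qc := Q.map (Complex.ofRealHom) with hQc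
  have hmap : (H + K).map (Complex.ofRealHom) = fromBlocks Pc Qc (-Qc) Pc := by
    rw [hsum, fromBlocks_map, fromBlocks_inj]
    refine ⟨rfl, rfl, ?_, rfl⟩
    ext i j
    simp [Matrix.map_apply, hQc]
  have hdetC : ((H + K).det : ℂ) =
      (Pc - Complex.I • Qc).det * (Pc + Complex.I • Qc).det := by
    rw [← det_fromBlocks_skew, ← hmap]
    exact Complex.ofRealHom.map_det (H + K)
  have hCP : Pc + Complex.I • Qc = (4 : ℂ) • C := by
    ext i j
    simp only [hPc, hQc, hP, hQ, hA, hB, hE, hF, hCdef, hHdef, Matrix.add_apply,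
      Matrix.sub_apply, Matrix.smul_apply, Matrix.map_apply, smul_eq_mul,
      Matrix.toBlocks₁₁, Matrix.toBlocks₁₂, Matrix.toBlocks₂₁, Matrix.toBlocks₂₂,
      realHessian, complexHessian, Matrix.of_apply, Complex.ofRealHom_eq_coe]
    push_cast
    ring
  have hCQ : Pc - Complex.I • Qc = ((4 : ℂ) • C).map (starRingEnd ℂ) := by
    rw [← hCP]
    ext i j
    simp only [Matrix.map_apply, Matrix.sub_apply, Matrix.add_apply, Matrix.smul_apply,
      smul_eq_mul, hPc, hQc, _root_.map_add, _root_.map_mul, Complex.conj_I,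
      Complex.conj_ofReal, Complex.ofRealHom_eq_coe]
    ring
  have hherm : C.IsHermitian := by
    apply Matrix.IsHermitian.ext
    intro i j
    have h1 := hsymm (Sum.inl i) (Sum.inl j)
    have h2 := hsymm (Sum.inr i) (Sum.inr j)
    have h3 := hsymm (Sum.inl i) (Sum.inr j)
    have h4 := hsymm (Sum.inr i) (Sum.inl j)
    simp only [hHdef, realHessian, Matrix.of_apply] at h1 h2 h3 h4
    simp only [hCdef, complexHessian, Matrix.of_apply, h1, h2, h3, h4, RCLike.star_def,
      _root_.map_mul, _root_.map_add, _root_.map_sub, Complex.conj_ofReal, map_div₀,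
      _root_.map_one, _root_.map_ofNat, Complex.conj_I]
    push_cast
    ring
  have hCdetreal : C.det = ((r : ℝ) : ℂ) := by
    have hstar : (starRingEnd ℂ) C.det = C.det := by
      have h := congrArg Matrix.det hherm
      rwa [det_conjTranspose] at h
    rw [hrdef]
    exact (Complex.conj_eq_iff_re.mp hstar).symm
  have hreal : (H + K).det = 4 ^ n * 4 ^ n * r ^ 2 := by
    have hc : ((H + K).det : ℂ) = ((4 ^ n * 4 ^ n * r ^ 2 : ℝ) : ℂ) := by
      have hmapdet : (((4:ℂ) • C).map ⇑(starRingEnd ℂ)).det = (starRingEnd ℂ) ((4:ℂ) • C).det := by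
        have hconj : ((4:ℂ) • C).map ⇑(starRingEnd ℂ) = (((4:ℂ) • C)ᵀ)ᴴ := by
          ext i j
          simp only [Matrix.map_apply, conjTranspose_apply, transpose_apply,
            Matrix.smul_apply, smul_eq_mul, RCLike.star_def]
        rw [hconj, det_conjTranspose, det_transpose]
        rfl
      rw [hdetC, hCQ, hCP, hmapdet, det_smul, hCdetreal]
      simp only [Fintype.card_fin, _root_.map_mul, map_pow, _root_.map_ofNat,
        Complex.conj_ofReal]
      push_cast
      ring
    exact_mod_cast hc
  by_cases h0 : H.det = 0
  · rw [h0]; positivity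
  · have hub := det_am_gm hpos hKpos hdetK h0
    have hcard : Fintype.card (Fin n ⊕ Fin n) = 2 * n := by simp [two_mul]
    rw [hcard, hreal] at hub
    have hpow : (4 : ℝ) ^ n * 4 ^ n * r ^ 2 = 2 ^ (2 * n) * (2 ^ (2 * n) * r ^ 2) := by
      rw [show (4 : ℝ) = 2 ^ 2 by norm_num, ← pow_mul]
      ring
    rw [hpow] at hub
    have h2 : (0 : ℝ) < 2 ^ (2 * n) := by positivity
    exact le_of_mul_le_mul_left hub h2
end

section
/- Let Θ be an N×N positive definite Hermitian matrix with eigenvalues bounded above by Λ and below by 1/Λ for some Λ ≥ 1. Then there exist N² unit vectors γ̃₁,…,γ̃_{N²} ∈ ℂ^N and real numbers β₁,…,β_{N²} with 1/C* ≤ β_ν ≤ C* (C* depending only on N and Λ) such that Θ⁻¹ = Σ_ν β_ν γ̃_ν γ̃_ν*. -/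
open Matrix
open scoped ComplexOrder

lemma siu_mul_diag_mul_star {N : ℕ} (V : Matrix (Fin N) (Fin N) ℂ) (d : Fin N → ℂ) :
    V * diagonal d * star V
      = ∑ j, d j • vecMulVec (fun i => V i j) (star fun k => V k j) := by
  ext i k
  rw [Matrix.mul_apply]
  simp only [Matrix.mul_diagonal, Matrix.sum_apply, Matrix.smul_apply, vecMulVec_apply,
    Matrix.star_apply, Pi.star_apply, smul_eq_mul]
  exact Finset.sum_congr rfl fun j _ => by ring

/-- Siu's lemma: there is a constant `C⁎` depending only on `N` and `Λ` such that the
inverse of any positive definite Hermitian `N × N` matrix `Θ` with eigenvalues in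
`[1/Λ, Λ]` can be written as `Θ⁻¹ = ∑ ν β_ν γ̃_ν γ̃_ν*` with `N²` unit vectors `γ̃_ν` and
coefficients `1/C⁎ ≤ β_ν ≤ C⁎`. -/
theorem siu_rank_one_decomposition (N : ℕ) (Λ : ℝ) (hΛ : 1 ≤ Λ) :
    ∃ Cstar : ℝ, 0 < Cstar ∧
      ∀ Θ : Matrix (Fin N) (Fin N) ℂ, Θ.PosDef →
        (((Λ : ℂ) • (1 : Matrix (Fin N) (Fin N) ℂ)) - Θ).PosSemidef →
        (Θ - ((Λ⁻¹ : ℂ) • (1 : Matrix (Fin N) (Fin N) ℂ))).PosSemidef →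
        ∃ (γ : Fin (N ^ 2) → Fin N → ℂ) (β : Fin (N ^ 2) → ℝ),
          (∀ ν, (∑ i, Complex.normSq (γ ν i)) = 1) ∧
          (∀ ν, 1 / Cstar ≤ β ν ∧ β ν ≤ Cstar) ∧
          Θ⁻¹ = ∑ ν, ((β ν : ℂ) • Matrix.vecMulVec (γ ν) (star (γ ν))) := by
  have hΛ0 : (0:ℝ) < Λ := lt_of_lt_of_le one_pos hΛ
  refine ⟨(N + 1) * Λ, by positivity, ?_⟩
  intro Θ hΘ hub hlb
  have hH : Θ.IsHermitian := hΘ.1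
  set u : Fin N → Fin N → ℂ := fun b => ⇑(hH.eigenvectorBasis b) with hu
  set lam : Fin N → ℝ := hH.eigenvalues with hlam
  -- unit vectors
  have hunit : ∀ b, star (u b) ⬝ᵥ (u b) = 1 := by
    intro b
    have h1 : ‖hH.eigenvectorBasis b‖ = 1 := hH.eigenvectorBasis.orthonormal.1 b
    have h2 := inner_self_eq_norm_sq_to_K (𝕜 := ℂ) (hH.eigenvectorBasis b)
    rw [EuclideanSpace.inner_eq_star_dotProduct] at h2
    rw [dotProduct_comm]; simpa [h1] using h2
  have hnormSq : ∀ b, (∑ i, Complex.normSq (u b i)) = 1 := by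
    intro b
    have h := hunit b
    have h2 : ((∑ i, Complex.normSq (u b i) : ℝ) : ℂ) = 1 := by
      rw [← h]
      simp [dotProduct, Complex.normSq_eq_conj_mul_self]
    exact_mod_cast h2
  -- quadratic form of eigenvectors
  have heig : ∀ b, star (u b) ⬝ᵥ (Θ *ᵥ u b) = (lam b : ℂ) := by
    intro b
    rw [hu]
    rw [hH.mulVec_eigenvectorBasis, dotProduct_smul]
    have := hunit b
    rw [hu] at this
    rw [this]
    simp [Complex.real_smul, hlam]
  have hpos : ∀ b, 0 < lam b := fun b => hΘ.eigenvalues_pos b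
  have hle : ∀ b, lam b ≤ Λ := by
    intro b
    have h := hub.dotProduct_mulVec_nonneg (u b)
    rw [sub_mulVec, smul_mulVec, one_mulVec, dotProduct_sub, dotProduct_smul,
      hunit b, heig b, smul_eq_mul, mul_one] at h
    have h2 : (0:ℂ) ≤ ((Λ - lam b : ℝ) : ℂ) := by push_cast; simpa using h
    have := Complex.zero_le_real.mp h2
    linarith
  have hge : ∀ b, Λ⁻¹ ≤ lam b := by
    intro b
    have h := hlb.dotProduct_mulVec_nonneg (u b)
    rw [sub_mulVec, smul_mulVec, one_mulVec, dotProduct_sub, dotProduct_smul,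
      hunit b, heig b, smul_eq_mul, mul_one] at h
    have h2 : (0:ℂ) ≤ ((lam b - Λ⁻¹ : ℝ) : ℂ) := by push_cast; simpa using h
    have := Complex.zero_le_real.mp h2
    linarith
  -- the inverse via the spectral theorem
  set U : Matrix (Fin N) (Fin N) ℂ := (hH.eigenvectorUnitary : Matrix (Fin N) (Fin N) ℂ) with hU
  have hUstar : star U * U = 1 := Matrix.mem_unitaryGroup_iff'.mp hH.eigenvectorUnitary.2
  have hUU : U * star U = 1 := Matrix.mem_unitaryGroup_iff.mp hH.eigenvectorUnitary.2
  have hinv : Θ⁻¹ = U * diagonal (fun b => ((lam b)⁻¹ : ℂ)) * star U := by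
    apply Matrix.inv_eq_right_inv
    conv_lhs => rw [hH.spectral_theorem]
    have hDD : diagonal (RCLike.ofReal ∘ lam : Fin N → ℂ) *
        diagonal (fun b => ((lam b)⁻¹ : ℂ)) = 1 := by
      rw [diagonal_mul_diagonal]
      convert diagonal_one with b
      have : (lam b : ℂ) ≠ 0 := by
        exact_mod_cast Complex.ofReal_ne_zero.mpr (hpos b).ne'
      simp [Function.comp, mul_inv_cancel₀ this]
    calc U * diagonal (RCLike.ofReal ∘ lam : Fin N → ℂ) * star U *
          (U * diagonal (fun b => ((lam b)⁻¹ : ℂ)) * star U)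
        = U * diagonal (RCLike.ofReal ∘ lam : Fin N → ℂ) * (star U * U) *
            diagonal (fun b => ((lam b)⁻¹ : ℂ)) * star U := by
          simp only [Matrix.mul_assoc]
      _ = U * (diagonal (RCLike.ofReal ∘ lam : Fin N → ℂ) *
            diagonal (fun b => ((lam b)⁻¹ : ℂ))) * star U := by
          rw [hUstar]; simp only [Matrix.mul_assoc, Matrix.one_mul]
      _ = 1 := by rw [hDD, Matrix.mul_one, hUU]
  have hdec : Θ⁻¹ = ∑ b, ((lam b)⁻¹ : ℂ) • vecMulVec (u b) (star (u b)) := by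
    rw [hinv, siu_mul_diag_mul_star]
    exact Finset.sum_congr rfl fun b _ => rfl
  -- reindexing over `Fin (N ^ 2)`
  let e : Fin (N ^ 2) ≃ Fin N × Fin N := (finCongr (pow_two N)).trans finProdFinEquiv.symm
  refine ⟨fun ν => u (e ν).2, fun ν => (lam ((e ν).2))⁻¹ / N, fun ν => hnormSq _, ?_, ?_⟩
  · intro ν
    set b := (e ν).2 with hb
    have hN1 : (1:ℝ) ≤ N := by exact_mod_cast Nat.one_le_iff_ne_zero.mpr (Fin.pos b).ne'
    have hNpos : (0:ℝ) < N := lt_of_lt_of_le one_pos hN1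
    have h1 := hge b
    have h2 := hle b
    have h3 := hpos b
    have hlaminv_le : (lam b)⁻¹ ≤ Λ := by
      rw [inv_le_comm₀ h3 hΛ0] at *
      exact h1
    have hlaminv_ge : Λ⁻¹ ≤ (lam b)⁻¹ := by
      exact inv_anti₀ h3 h2
    constructor
    · rw [div_le_div_iff₀ (by positivity) hNpos]
      have : 1 * N ≤ Λ⁻¹ * ((N + 1) * Λ) := by
        rw [show Λ⁻¹ * ((N + 1) * Λ) = (N + 1) * (Λ⁻¹ * Λ) by ring, inv_mul_cancel₀ hΛ0.ne']
        linarith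
      calc 1 * N ≤ Λ⁻¹ * ((N + 1) * Λ) := this
        _ ≤ (lam b)⁻¹ * ((N + 1) * Λ) := by
            apply mul_le_mul_of_nonneg_right hlaminv_ge (by positivity)
    · calc (lam b)⁻¹ / N ≤ (lam b)⁻¹ := by
            apply div_le_self (by positivity) hN1
        _ ≤ Λ := hlaminv_le
        _ ≤ (N + 1) * Λ := by nlinarith
  · rw [hdec]
    rw [show (∑ ν, ((((lam ((e ν).2))⁻¹ / N : ℝ) : ℂ) •
        vecMulVec (u (e ν).2) (star (u (e ν).2))))
      = ∑ p : Fin N × Fin N, ((((lam p.2)⁻¹ / N : ℝ) : ℂ) •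
        vecMulVec (u p.2) (star (u p.2))) from
      Equiv.sum_comp e fun p => ((((lam p.2)⁻¹ / N : ℝ) : ℂ) •
        vecMulVec (u p.2) (star (u p.2)))]
    rw [Fintype.sum_prod_type]
    dsimp only
    rw [Finset.sum_const, Finset.card_univ, Fintype.card_fin, Finset.smul_sum]
    symm
    refine Finset.sum_congr rfl fun y _ => ?_
    have hN0 : (N:ℝ) ≠ 0 := by exact_mod_cast (Fin.pos y).ne'
    have hN0' : (N:ℂ) ≠ 0 := by exact_mod_cast (Fin.pos y).ne'
    rw [← Nat.cast_smul_eq_nsmul ℂ, smul_smul]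
    congr 1
    push_cast
    rw [mul_comm, div_mul_cancel₀ _ hN0']
end

section
/- Let u : ℂⁿ → ℝ be a bounded plurisubharmonic function with bounded gradient satisfying the homogeneous complex Monge–Ampère equation (√-1 ∂∂̄ u)ⁿ = 0 in the pluripotential sense (i.e., u is maximal). Then u is constant. -/
open scoped Topology

/-- `v` is plurisubharmonic on the open set `U ⊆ ℂⁿ`: it is continuous on `U` and satisfies
the sub-mean value inequality on every complex disc contained in `U`. -/
def PshOn {n : ℕ} (U : Set (Fin n → ℂ)) (v : (Fin n → ℂ) → ℝ) : Prop :=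
  ContinuousOn v U ∧
    ∀ (a b : Fin n → ℂ) (r : ℝ), 0 < r →
      (∀ t : ℂ, ‖t‖ ≤ r → a + t • b ∈ U) →
      v a ≤ (1 / (2 * Real.pi)) *
        ∫ θ in (0:ℝ)..(2 * Real.pi), v (a + (((r : ℂ) * Complex.exp ((θ : ℂ) * Complex.I)) • b))

/-- `u` is a maximal plurisubharmonic function on `ℂⁿ`: it satisfies
`(√-1 ∂∂̄ u)ⁿ = 0` in the pluripotential sense, i.e. it dominates on every bounded open
set `G` any function plurisubharmonic near `closure G` that it dominates on `∂G`. -/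
def MaximalPsh {n : ℕ} (u : (Fin n → ℂ) → ℝ) : Prop :=
  ∀ (G : Set (Fin n → ℂ)), IsOpen G → Bornology.IsBounded G →
    ∀ (U : Set (Fin n → ℂ)), IsOpen U → closure G ⊆ U →
      ∀ v : (Fin n → ℂ) → ℝ, PshOn U v →
        (∀ x ∈ frontier G, v x ≤ u x) → ∀ x ∈ G, v x ≤ u x

open Complex Metric intervalIntegral Real

lemma zero_log {c : ℂ} (hc : ‖c‖ < 1) :
    ∫ θ in (0:ℝ)..(2*Real.pi), Real.log (‖1 + c * Complex.exp ((θ:ℂ) * Complex.I)‖) = 0 := by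
  have hmem : ∀ z : ℂ, ‖z‖ ≤ 1 → (1 + c * z) ∈ Complex.slitPlane := by
    intro z hz
    rw [Complex.mem_slitPlane_iff]
    left
    have h1 : ‖c * z‖ < 1 := by
      rw [norm_mul]
      calc ‖c‖ * ‖z‖ ≤ ‖c‖ * 1 :=
        mul_le_mul_of_nonneg_left hz (norm_nonneg c)
      _ < 1 := by simpa using hc
    have h2 : |(c*z).re| ≤ ‖c*z‖ := Complex.abs_re_le_norm _
    have : (1 + c*z).re = 1 + (c*z).re := by simp
    rw [this]
    have := abs_le.mp h2
    linarith [this.1, this.2]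
  set f : ℂ → ℂ := fun z => Complex.log (1 + c * z) with hf
  have hg : Continuous fun z : ℂ => 1 + c * z := by continuity
  have hca : ∀ z : ℂ, ‖z‖ ≤ 1 → ContinuousAt f z := by
    intro z hz
    exact hg.continuousAt.clog (hmem z hz)
  have hcont : ContinuousOn f (closedBall 0 1) := by
    intro z hz
    exact (hca z (by simpa [Complex.dist_eq] using hz)).continuousWithinAt
  have hdiff : ∀ z ∈ ball (0:ℂ) 1 \ (∅ : Set ℂ), DifferentiableAt ℂ f z := by
    intro z hz
    have hz1 : ‖z‖ ≤ 1 := by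
      have := hz.1
      simp only [mem_ball, Complex.dist_eq, sub_zero] at this
      exact this.le
    exact (Complex.differentiableAt_log (hmem z hz1)).comp z
      ((differentiableAt_id.const_mul c).const_add 1)
  have key := Complex.circleIntegral_sub_center_inv_smul_of_differentiable_on_off_countable
    one_pos Set.countable_empty hcont hdiff
  have hf0 : f 0 = 0 := by simp [hf]
  rw [hf0, smul_zero] at key
  have hne : ∀ θ : ℝ, circleMap 0 1 θ ≠ 0 := by
    intro θ h
    have := norm_circleMap_zero 1 θ
    rw [h] at this
    simp at this
  have h1 : (∮ z in C(0, 1), (z - 0)⁻¹ • f z)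
      = ∫ θ in (0:ℝ)..(2*Real.pi), Complex.I * f (circleMap 0 1 θ) := by
    rw [circleIntegral]
    refine intervalIntegral.integral_congr fun θ _ => ?_
    rw [deriv_circleMap]
    have := hne θ
    field_simp
    simp only [smul_eq_mul, sub_zero, one_div]
    rw [mul_comm (circleMap 0 1 θ) I, mul_assoc, ← mul_assoc (circleMap 0 1 θ), mul_inv_cancel₀ this, one_mul]
  rw [h1] at key
  have hcontc : Continuous fun θ : ℝ => f (circleMap 0 1 θ) := by
    rw [continuous_iff_continuousAt]
    intro θ
    exact (hca _ (by simp [norm_circleMap_zero])).comp (continuous_circleMap 0 1).continuousAt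
  have hInt : IntervalIntegrable (fun θ : ℝ => f (circleMap 0 1 θ)) MeasureTheory.volume 0 (2*Real.pi) :=
    hcontc.intervalIntegrable _ _
  rw [intervalIntegral.integral_const_mul] at key
  have hI0 : (∫ θ in (0:ℝ)..(2*Real.pi), f (circleMap 0 1 θ)) = 0 := by
    rcases mul_eq_zero.mp key with h | h
    · exact absurd h Complex.I_ne_zero
    · exact h
  have hre := Complex.reCLM.intervalIntegral_comp_comm hInt
  rw [hI0] at hre
  simp only [Complex.reCLM_apply] at hre
  have : (fun θ : ℝ => (f (circleMap 0 1 θ)).re)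
      = fun θ : ℝ => Real.log (‖1 + c * Complex.exp ((θ:ℂ) * Complex.I)‖) := by
    funext θ
    simp [hf, Complex.log_re, circleMap]
  rw [this] at hre
  simpa using hre

lemma abs_one_add_pos {c : ℂ} (hc : ‖c‖ < 1) (z : ℂ) (hz : ‖z‖ = 1) :
    0 < ‖1 + c * z‖ := by
  have h1 : ‖c * z‖ < 1 := by rw [norm_mul, hz, mul_one]; exact hc
  have h2 : (1:ℝ) ≤ ‖1 + c * z‖ + ‖c * z‖ := by
    have := norm_add_le (1 + c * z) (-(c * z))
    simpa using this
  linarith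

lemma log_circle {a : ℂ} {r : ℝ} (hr : 0 ≤ r) (hra : r < ‖a‖) :
    ∫ θ in (0:ℝ)..(2*Real.pi), Real.log (‖a + (r:ℂ) * Complex.exp ((θ:ℂ) * Complex.I)‖)
      = 2 * Real.pi * Real.log (‖a‖) := by
  have ha : a ≠ 0 := by
    intro h
    rw [h] at hra
    simp at hra
    linarith
  set c : ℂ := (r:ℂ) / a with hc
  have hcabs : ‖c‖ < 1 := by
    rw [hc, norm_div, Complex.norm_real, Real.norm_of_nonneg hr]
    rw [div_lt_one (norm_pos_iff.mpr ha)]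
    exact hra
  have hfact : ∀ θ : ℝ, a + (r:ℂ) * Complex.exp ((θ:ℂ) * Complex.I)
      = a * (1 + c * Complex.exp ((θ:ℂ) * Complex.I)) := by
    intro θ
    rw [hc]
    field_simp
  have hptw : ∀ θ : ℝ, Real.log (‖a + (r:ℂ) * Complex.exp ((θ:ℂ) * Complex.I)‖)
      = Real.log (‖a‖) + Real.log (‖1 + c * Complex.exp ((θ:ℂ) * Complex.I)‖) := by
    intro θ
    rw [hfact θ, norm_mul]
    exact Real.log_mul (norm_ne_zero_iff.mpr ha)
      (abs_one_add_pos hcabs _ (by simp [Complex.norm_exp])).ne'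
  have hcontg : Continuous fun θ : ℝ => Real.log (‖1 + c * Complex.exp ((θ:ℂ) * Complex.I)‖) := by
    rw [continuous_iff_continuousAt]
    intro θ
    have hin : Continuous fun θ : ℝ => ‖1 + c * Complex.exp ((θ:ℂ) * Complex.I)‖ := by
      apply continuous_norm.comp
      continuity
    exact hin.continuousAt.log (abs_one_add_pos hcabs _ (by simp [Complex.norm_exp])).ne'
  rw [intervalIntegral.integral_congr (fun θ _ => hptw θ)]
  rw [intervalIntegral.integral_add (intervalIntegrable_const)
    (hcontg.intervalIntegrable _ _)]
  rw [zero_log hcabs, intervalIntegral.integral_const]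
  simp [mul_comm]

lemma normSq_circle (x : ℂ) (r : ℝ) :
    ∫ θ in (0:ℝ)..(2*Real.pi), Complex.normSq (x + (r:ℂ) * Complex.exp ((θ:ℂ) * Complex.I))
      = 2 * Real.pi * (Complex.normSq x + r^2) := by
  have hptw : ∀ θ : ℝ, Complex.normSq (x + (r:ℂ) * Complex.exp ((θ:ℂ) * Complex.I))
      = (Complex.normSq x + r^2) + ((2*r*x.re) * Real.cos θ + (2*r*x.im) * Real.sin θ) := by
    intro θ
    have hre : (x + (r:ℂ) * Complex.exp ((θ:ℂ) * Complex.I)).re = x.re + r * Real.cos θ := by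
      simp [Complex.exp_ofReal_mul_I_re]
    have him : (x + (r:ℂ) * Complex.exp ((θ:ℂ) * Complex.I)).im = x.im + r * Real.sin θ := by
      simp [Complex.exp_ofReal_mul_I_im]
    rw [Complex.normSq_apply, hre, him, Complex.normSq_apply]
    have hpy := Real.sin_sq_add_cos_sq θ
    ring_nf
    nlinarith [hpy]
  rw [intervalIntegral.integral_congr (fun θ _ => hptw θ)]
  have hcos : IntervalIntegrable (fun θ : ℝ => (2*r*x.re) * Real.cos θ) MeasureTheory.volume 0 (2*Real.pi) :=
    (continuous_const.mul Real.continuous_cos).intervalIntegrable _ _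
  have hsin : IntervalIntegrable (fun θ : ℝ => (2*r*x.im) * Real.sin θ) MeasureTheory.volume 0 (2*Real.pi) :=
    (continuous_const.mul Real.continuous_sin).intervalIntegrable _ _
  rw [intervalIntegral.integral_add intervalIntegrable_const (hcos.add hsin),
    intervalIntegral.integral_add hcos hsin,
    intervalIntegral.integral_const_mul, intervalIntegral.integral_const_mul,
    integral_cos, integral_sin]
  simp [Real.sin_two_pi, Real.cos_two_pi]
  ring

lemma max_principle {Ω : Set ℂ} (hΩo : IsOpen Ω) (hΩb : Bornology.IsBounded Ω) (hne : Ω.Nonempty)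
    {w : ℂ → ℝ} (hw : ContinuousOn w (closure Ω)) {δ : ℝ} (hδ : 0 < δ)
    (hsub : ∀ x ∈ Ω, ∀ r : ℝ, 0 < r → Metric.closedBall x r ⊆ Ω →
      w x + δ * r^2 ≤ (1/(2*Real.pi)) *
        ∫ θ in (0:ℝ)..(2*Real.pi), w (x + (r:ℂ) * Complex.exp ((θ:ℂ) * Complex.I))) :
    ∃ z ∈ frontier Ω, ∀ x ∈ closure Ω, w x ≤ w z := by
  have hcomp : IsCompact (closure Ω) := hΩb.isCompact_closure
  obtain ⟨z, hz, hmax⟩ := hcomp.exists_isMaxOn hne.closure hw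
  have hzΩ : z ∉ Ω := by
    intro hzin
    obtain ⟨ε, hε, hball⟩ := Metric.isOpen_iff.mp hΩo z hzin
    set ρ := ε/2 with hρ
    have hρpos : 0 < ρ := by positivity
    have hsubset : Metric.closedBall z ρ ⊆ Ω :=
      (Metric.closedBall_subset_ball (by rw [hρ]; linarith)).trans hball
    have hcirc : ∀ θ : ℝ, z + (ρ:ℂ) * Complex.exp ((θ:ℂ) * Complex.I) ∈ Metric.closedBall z ρ := by
      intro θ
      simp only [Metric.mem_closedBall, Complex.dist_eq]
      have : z + (ρ:ℂ) * Complex.exp ((θ:ℂ) * Complex.I) - z = (ρ:ℂ) * Complex.exp ((θ:ℂ) * Complex.I) := by ring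
      rw [this, norm_mul, Complex.norm_real, Complex.norm_exp]
      simp [abs_of_pos hρpos]
    have hwc : Continuous fun θ : ℝ => w (z + (ρ:ℂ) * Complex.exp ((θ:ℂ) * Complex.I)) := by
      have hφ : Continuous fun θ : ℝ => z + (ρ:ℂ) * Complex.exp ((θ:ℂ) * Complex.I) :=
        continuous_const.add (continuous_const.mul
          (Complex.continuous_exp.comp (Complex.continuous_ofReal.mul continuous_const)))
      rw [← continuousOn_univ]
      exact hw.comp hφ.continuousOn fun θ _ => subset_closure (hsubset (hcirc θ))
    have hmono : (∫ θ in (0:ℝ)..(2*Real.pi), w (z + (ρ:ℂ) * Complex.exp ((θ:ℂ) * Complex.I)))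
        ≤ ∫ _ in (0:ℝ)..(2*Real.pi), w z := by
      apply intervalIntegral.integral_mono_on Real.two_pi_pos.le
        (hwc.intervalIntegrable _ _) intervalIntegrable_const
      intro θ _
      exact hmax (subset_closure (hsubset (hcirc θ)))
    have hkey := hsub z hzin ρ hρpos hsubset
    rw [intervalIntegral.integral_const] at hmono
    simp only [smul_eq_mul, sub_zero] at hmono
    have h2π : (0:ℝ) < 2 * Real.pi := Real.two_pi_pos
    have havg : (1/(2*Real.pi)) * ∫ θ in (0:ℝ)..(2*Real.pi), w (z + (ρ:ℂ) * Complex.exp ((θ:ℂ) * Complex.I))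
        ≤ w z := by
      rw [div_mul_eq_mul_div, one_mul, div_le_iff₀ h2π] at *
      calc (∫ θ in (0:ℝ)..(2*Real.pi), w (z + (ρ:ℂ) * Complex.exp ((θ:ℂ) * Complex.I)))
          ≤ 2 * Real.pi * w z := by linarith
        _ = w z * (2 * Real.pi) := by ring
    have hpos : 0 < δ * ρ^2 := by positivity
    linarith
  refine ⟨z, ?_, fun x hx => hmax hx⟩
  rw [frontier, hΩo.interior_eq]
  exact ⟨hz, hzΩ⟩

lemma line_le {g : ℂ → ℝ} {K : NNReal} {M : ℝ}
    (hLip : LipschitzWith K g) (hM : ∀ t, g t ≤ M)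
    (hsub : ∀ c : ℂ, ∀ r : ℝ, 0 < r → g c ≤ (1/(2*Real.pi)) *
      ∫ θ in (0:ℝ)..(2*Real.pi), g (c + (r:ℂ) * Complex.exp ((θ:ℂ) * Complex.I)))
    (p q : ℂ) : g q ≤ g p := by
  have hgc : Continuous g := hLip.continuous
  have hdistg : ∀ s t : ℂ, g s ≤ g t + (K:ℝ) * dist s t := by
    intro s t
    have := hLip.dist_le_mul s t
    rw [Real.dist_eq] at this
    have h1 := abs_le.mp this
    linarith [h1.1, h1.2]
  refine le_of_forall_pos_le_add ?_
  intro ε hε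
  obtain ⟨r₀, hr₀def⟩ : ∃ r₀ : ℝ, r₀ = ε / (4 * ((K:ℝ) + 1)) := ⟨_, rfl⟩
  have hKpos : (0:ℝ) ≤ (K:ℝ) := K.coe_nonneg
  have hr₀ : 0 < r₀ := by rw [hr₀def]; positivity
  have hK1 : (0:ℝ) < (K:ℝ) + 1 := by linarith
  have hr₀eq : ((K:ℝ) + 1) * r₀ = ε/4 := by
    rw [hr₀def]
    field_simp
  have hKr₀ : (K:ℝ) * r₀ ≤ ε/4 := by
    rw [← hr₀eq]
    nlinarith
  obtain ⟨d, hddef⟩ : ∃ d : ℝ, d = dist q p := ⟨_, rfl⟩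
  by_cases hd : d ≤ r₀
  · -- trivial case : q close to p
    have := hdistg q p
    have h4 : (K:ℝ) * d ≤ (K:ℝ) * r₀ := by
      apply mul_le_mul_of_nonneg_left hd hKpos
    nlinarith
  push_neg at hd
  -- main case
  have hdpos : 0 < d := hr₀.trans hd
  have hlogpos : 0 < Real.log (d / r₀) := Real.log_pos ((one_lt_div hr₀).mpr hd)
  obtain ⟨c, hcdef⟩ : ∃ c : ℝ, c = (ε/4) / Real.log (d / r₀) := ⟨_, rfl⟩
  have hcpos : 0 < c := by rw [hcdef]; positivity
  obtain ⟨R, hRdef⟩ : ∃ R : ℝ, R = max (d + 1) (r₀ * Real.exp ((M - g p) / c)) := ⟨_, rfl⟩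
  have hdR : d < R := by rw [hRdef]; exact lt_of_lt_of_le (by linarith) (le_max_left _ _)
  have hr₀R : r₀ < R := hd.trans hdR
  have hRpos : 0 < R := hr₀.trans hr₀R
  have hRlog : M - c * Real.log (R / r₀) ≤ g p := by
    have h1 : r₀ * Real.exp ((M - g p) / c) ≤ R := by rw [hRdef]; exact le_max_right _ _
    have h2 : Real.exp ((M - g p) / c) ≤ R / r₀ := by
      rw [le_div_iff₀ hr₀]
      linarith [h1]
    have h3 : (M - g p) / c ≤ Real.log (R / r₀) := by
      rw [← Real.log_exp ((M - g p) / c)]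
      exact Real.log_le_log (Real.exp_pos _) h2
    have h4 : (M - g p) ≤ c * Real.log (R / r₀) := by
      rw [div_le_iff₀ hcpos] at h3
      linarith [h3]
    linarith
  set Ω : Set ℂ := Metric.ball p R \ Metric.closedBall p r₀ with hΩdef
  have hΩo : IsOpen Ω := Metric.isOpen_ball.sdiff Metric.isClosed_closedBall
  have hΩb : Bornology.IsBounded Ω := Metric.isBounded_ball.subset Set.diff_subset
  have hqΩ : q ∈ Ω := by
    constructor
    · rw [Metric.mem_ball, ← hddef]; exact hdR
    · rw [Metric.mem_closedBall, ← hddef]; push_neg; exact hd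
  obtain ⟨C, hCdef⟩ : ∃ C : ℝ, C = ‖p‖ + R := ⟨_, rfl⟩
  have hCpos : 0 < C := by
    have := norm_nonneg p
    rw [hCdef]
    linarith
  obtain ⟨δ, hδdef⟩ : ∃ δ : ℝ, δ = (ε/4) / (C^2 + 1) := ⟨_, rfl⟩
  have hδpos : 0 < δ := by rw [hδdef]; positivity
  -- the comparison function
  set w : ℂ → ℝ := fun t => g t - c * Real.log (‖t - p‖ / r₀) + δ * Complex.normSq t
    with hwdef
  -- closure of Ω is contained in the closed annulus
  have hclos : closure Ω ⊆ {t : ℂ | r₀ ≤ dist t p ∧ dist t p ≤ R} := by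
    apply closure_minimal
    · rintro t ⟨ht1, ht2⟩
      rw [Metric.mem_ball] at ht1
      rw [Metric.mem_closedBall] at ht2
      push_neg at ht2
      exact ⟨ht2.le, ht1.le⟩
    · exact IsClosed.inter (isClosed_le continuous_const (continuous_id.dist continuous_const))
        (isClosed_le (continuous_id.dist continuous_const) continuous_const)
  -- continuity of w on the closure
  have hwcont : ContinuousOn w (closure Ω) := by
    apply ContinuousOn.add
    · apply ContinuousOn.sub hgc.continuousOn
      apply ContinuousOn.const_smul ?_ c
      intro t ht
      have htr : r₀ ≤ ‖t - p‖ := by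
        have := (hclos ht).1
        rwa [Complex.dist_eq] at this
      have hargpos : 0 < ‖t - p‖ / r₀ :=
        div_pos (lt_of_lt_of_le hr₀ htr) hr₀
      exact (ContinuousAt.continuousWithinAt
        ((((continuous_norm.comp (continuous_id.sub continuous_const)).div_const
          r₀).continuousAt).log hargpos.ne'))
    · exact (Complex.continuous_normSq.continuousOn).const_smul δ
  -- the strict submean property of w on Ω
  have hsubw : ∀ x ∈ Ω, ∀ ρ : ℝ, 0 < ρ → Metric.closedBall x ρ ⊆ Ω →
      w x + δ * ρ^2 ≤ (1/(2*Real.pi)) *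
        ∫ θ in (0:ℝ)..(2*Real.pi), w (x + (ρ:ℂ) * Complex.exp ((θ:ℂ) * Complex.I)) := by
    intro x hx ρ hρ hball
    have hpnot : p ∉ Ω := by
      intro hp
      exact hp.2 (Metric.mem_closedBall_self hr₀.le)
    have hpx : ρ < ‖x - p‖ := by
      by_contra hcon
      push_neg at hcon
      apply hpnot
      apply hball
      rw [Metric.mem_closedBall, dist_comm, Complex.dist_eq]
      exact hcon
    have habsxp : 0 < ‖x - p‖ := hρ.trans hpx
    have hcircabs : ∀ θ : ℝ, 0 < ‖(x + (ρ:ℂ) * Complex.exp ((θ:ℂ) * Complex.I)) - p‖ := by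
      intro θ
      have h1 : ‖(ρ:ℂ) * Complex.exp ((θ:ℂ) * Complex.I)‖ = ρ := by
        rw [norm_mul, Complex.norm_real, Complex.norm_exp]
        simp [abs_of_pos hρ]
      have h2 := norm_add_le ((x + (ρ:ℂ) * Complex.exp ((θ:ℂ) * Complex.I)) - p)
          (-((ρ:ℂ) * Complex.exp ((θ:ℂ) * Complex.I)))
      have heq : (x + (ρ:ℂ) * Complex.exp ((θ:ℂ) * Complex.I)) - p
          + -((ρ:ℂ) * Complex.exp ((θ:ℂ) * Complex.I)) = x - p := by ring
      rw [heq, norm_neg, h1] at h2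
      linarith
    have hφ : Continuous fun θ : ℝ => x + (ρ:ℂ) * Complex.exp ((θ:ℂ) * Complex.I) :=
      continuous_const.add (continuous_const.mul
        (Complex.continuous_exp.comp (Complex.continuous_ofReal.mul continuous_const)))
    have hIg : IntervalIntegrable (fun θ : ℝ => g (x + (ρ:ℂ) * Complex.exp ((θ:ℂ) * Complex.I)))
        MeasureTheory.volume 0 (2*Real.pi) := (hgc.comp hφ).intervalIntegrable _ _
    have hlogc : Continuous fun θ : ℝ =>
        Real.log (‖(x + (ρ:ℂ) * Complex.exp ((θ:ℂ) * Complex.I)) - p‖) := by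
      rw [continuous_iff_continuousAt]
      intro θ
      exact ((continuous_norm.comp (hφ.sub continuous_const)).continuousAt).log
        (hcircabs θ).ne'
    have hIlog : IntervalIntegrable (fun θ : ℝ =>
        Real.log (‖(x + (ρ:ℂ) * Complex.exp ((θ:ℂ) * Complex.I)) - p‖))
        MeasureTheory.volume 0 (2*Real.pi) := hlogc.intervalIntegrable _ _
    have hIsq : IntervalIntegrable (fun θ : ℝ =>
        Complex.normSq (x + (ρ:ℂ) * Complex.exp ((θ:ℂ) * Complex.I)))
        MeasureTheory.volume 0 (2*Real.pi) :=
      (Complex.continuous_normSq.comp hφ).intervalIntegrable _ _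
    have hlogint : (∫ θ in (0:ℝ)..(2*Real.pi),
        Real.log (‖(x + (ρ:ℂ) * Complex.exp ((θ:ℂ) * Complex.I)) - p‖))
        = 2 * Real.pi * Real.log (‖x - p‖) := by
      have heq2 : ∀ θ : ℝ, Real.log (‖(x + (ρ:ℂ) * Complex.exp ((θ:ℂ) * Complex.I)) - p‖)
          = Real.log (‖(x - p) + (ρ:ℂ) * Complex.exp ((θ:ℂ) * Complex.I)‖) := by
        intro θ
        congr 2
        ring
      rw [intervalIntegral.integral_congr (fun θ _ => heq2 θ)]
      exact log_circle hρ.le hpx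
    have hsqint := normSq_circle x ρ
    have hsplit : (∫ θ in (0:ℝ)..(2*Real.pi), w (x + (ρ:ℂ) * Complex.exp ((θ:ℂ) * Complex.I)))
        = (∫ θ in (0:ℝ)..(2*Real.pi), g (x + (ρ:ℂ) * Complex.exp ((θ:ℂ) * Complex.I)))
          - c * (2 * Real.pi * Real.log (‖x - p‖) - 2 * Real.pi * Real.log r₀)
          + δ * (2 * Real.pi * (Complex.normSq x + ρ^2)) := by
      have hptw : ∀ θ : ℝ, w (x + (ρ:ℂ) * Complex.exp ((θ:ℂ) * Complex.I))
          = g (x + (ρ:ℂ) * Complex.exp ((θ:ℂ) * Complex.I))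
            - c * (Real.log (‖(x + (ρ:ℂ) * Complex.exp ((θ:ℂ) * Complex.I)) - p‖)
                   - Real.log r₀)
            + δ * Complex.normSq (x + (ρ:ℂ) * Complex.exp ((θ:ℂ) * Complex.I)) := by
        intro θ
        rw [hwdef]
        simp only []
        rw [Real.log_div (hcircabs θ).ne' hr₀.ne']
      rw [intervalIntegral.integral_congr (fun θ _ => hptw θ)]
      rw [intervalIntegral.integral_add (IntervalIntegrable.sub hIg
        (((hIlog.sub (intervalIntegrable_const)).const_mul c)))
        (hIsq.const_mul δ)]
      rw [intervalIntegral.integral_sub hIg ((hIlog.sub (intervalIntegrable_const)).const_mul c)]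
      rw [intervalIntegral.integral_const_mul, intervalIntegral.integral_const_mul]
      rw [intervalIntegral.integral_sub hIlog intervalIntegrable_const]
      rw [hlogint, hsqint, intervalIntegral.integral_const]
      simp only [smul_eq_mul, sub_zero]
      try ring
    have hgx := hsub x ρ hρ
    have hπ : Real.pi ≠ 0 := Real.pi_ne_zero
    have hfactor : ∀ A : ℝ, (1/(2*Real.pi)) * (2 * Real.pi * A) = A := by
      intro A
      field_simp
    have hwx : w x = g x - c * (Real.log (‖x - p‖) - Real.log r₀)
        + δ * Complex.normSq x := by
      rw [hwdef]
      simp only []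
      rw [Real.log_div habsxp.ne' hr₀.ne']
    rw [hwx, hsplit]
    have hrhs : (1/(2*Real.pi)) *
        ((∫ θ in (0:ℝ)..(2*Real.pi), g (x + (ρ:ℂ) * Complex.exp ((θ:ℂ) * Complex.I)))
          - c * (2 * Real.pi * Real.log (‖x - p‖) - 2 * Real.pi * Real.log r₀)
          + δ * (2 * Real.pi * (Complex.normSq x + ρ^2)))
        = (1/(2*Real.pi)) * (∫ θ in (0:ℝ)..(2*Real.pi), g (x + (ρ:ℂ) * Complex.exp ((θ:ℂ) * Complex.I)))
          - c * (Real.log (‖x - p‖) - Real.log r₀)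
          + δ * (Complex.normSq x + ρ^2) := by
      have h1 := hfactor (Real.log (‖x - p‖) - Real.log r₀)
      have h2 := hfactor (Complex.normSq x + ρ^2)
      rw [mul_add, mul_sub]
      rw [show c * (2 * Real.pi * Real.log (‖x - p‖) - 2 * Real.pi * Real.log r₀)
          = c * (2 * Real.pi * (Real.log (‖x - p‖) - Real.log r₀)) by ring]
      rw [show (1/(2*Real.pi)) * (c * (2 * Real.pi * (Real.log (‖x - p‖) - Real.log r₀)))
          = c * ((1/(2*Real.pi)) * (2 * Real.pi * (Real.log (‖x - p‖) - Real.log r₀))) by ring]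
      rw [show (1/(2*Real.pi)) * (δ * (2 * Real.pi * (Complex.normSq x + ρ^2)))
          = δ * ((1/(2*Real.pi)) * (2 * Real.pi * (Complex.normSq x + ρ^2))) by ring]
      rw [h1, h2]
    rw [hrhs]
    linarith [hgx]
  -- apply the maximum principle
  obtain ⟨z, hzf, hzmax⟩ := max_principle hΩo hΩb ⟨q, hqΩ⟩ hwcont hδpos hsubw
  have hwq := hzmax q (subset_closure hqΩ)
  -- identify the frontier
  have hfr : dist z p = r₀ ∨ dist z p = R := by
    have h1 : frontier Ω ⊆ frontier (Metric.ball p R) ∪ frontier (Metric.closedBall p r₀) := by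
      rw [hΩdef]
      rw [Set.diff_eq]
      intro t ht
      rcases frontier_inter_subset _ _ ht with h | h
      · exact Or.inl h.1
      · right
        rw [← frontier_compl]
        exact h.2
    rcases h1 hzf with h | h
    · right
      rw [frontier_ball p hRpos.ne'] at h
      exact h
    · left
      rw [frontier_closedBall p hr₀.ne'] at h
      exact h
  -- bound on normSq z
  have hzclos : z ∈ closure Ω := frontier_subset_closure hzf
  have hnormz : Complex.normSq z ≤ C^2 := by
    have hdz : dist z p ≤ R := (hclos hzclos).2
    have habz : ‖z‖ ≤ C := by
      have h1 := norm_add_le (z - p) p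
      simp only [sub_add_cancel] at h1
      rw [← Complex.dist_eq] at h1
      rw [hCdef]
      linarith
    rw [← Complex.sq_norm]
    have := norm_nonneg z
    nlinarith
  have hδC : δ * Complex.normSq z ≤ ε/4 := by
    have h1 : δ * Complex.normSq z ≤ δ * C^2 := by
      apply mul_le_mul_of_nonneg_left hnormz hδpos.le
    have h2 : δ * (C^2 + 1) = ε/4 := by
      rw [hδdef]
      field_simp
    have h3 : δ * (C^2 + 1) = δ * C^2 + δ := by ring
    nlinarith [hδpos]
  -- bound w z in both cases
  have hwz : w z ≤ g p + ε/4 + ε/4 := by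
    rcases hfr with h | h
    · -- inner circle
      have hlogz : Real.log (‖z - p‖ / r₀) = 0 := by
        rw [Complex.dist_eq] at h
        rw [h, div_self hr₀.ne', Real.log_one]
      have hgz : g z ≤ g p + (K:ℝ) * r₀ := by
        have := hdistg z p
        rw [h] at this
        exact this
      rw [hwdef]
      simp only []
      rw [hlogz]
      have : (K:ℝ) * r₀ ≤ ε/4 := hKr₀
      linarith [hδC]
    · -- outer circle
      have hlogz : Real.log (‖z - p‖ / r₀) = Real.log (R / r₀) := by
        rw [Complex.dist_eq] at h
        rw [h]
      rw [hwdef]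
      simp only []
      rw [hlogz]
      have hgz : g z ≤ M := hM z
      have := hRlog
      linarith [hδC]
  -- bound w q from below
  have hwqlow : g q - ε/4 ≤ w q := by
    have hlogq : c * Real.log (‖q - p‖ / r₀) = ε/4 := by
      have habs : ‖q - p‖ = d := by rw [hddef, Complex.dist_eq]
      rw [habs, hcdef, div_mul_cancel₀ _ hlogpos.ne']
    rw [hwdef]
    simp only []
    rw [hlogq]
    nlinarith [mul_nonneg hδpos.le (Complex.normSq_nonneg q)]
  have h1 : g q ≤ w q + ε/4 := by linarith
  have h2 : w q ≤ g p + ε/4 + ε/4 := le_trans hwq hwz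
  linarith

theorem liouville_maximal_psh' {n : ℕ} (u : (Fin n → ℂ) → ℝ)
    (hpsh : PshOn Set.univ u)
    (hbdd : ∃ M : ℝ, ∀ x, |u x| ≤ M)
    (hgrad : ∃ L : NNReal, LipschitzWith L u)
    (hmax : MaximalPsh u) :
    ∃ c : ℝ, ∀ x, u x = c := by
  obtain ⟨M, hM⟩ := hbdd
  obtain ⟨L, hL⟩ := hgrad
  refine ⟨u 0, fun x => ?_⟩
  set g : ℂ → ℝ := fun t => u (t • x) with hgdef
  have hgLip : LipschitzWith (L * ‖x‖₊) g := by
    rw [lipschitzWith_iff_dist_le_mul]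
    intro s t
    have h1 : dist (g s) (g t) ≤ (L:ℝ) * dist (s • x) (t • x) := by
      rw [hgdef]
      exact hL.dist_le_mul _ _
    have h2 : dist (s • x) (t • x) = dist s t * ‖x‖ := by
      rw [dist_eq_norm, ← sub_smul, norm_smul, dist_eq_norm]
    rw [h2] at h1
    calc dist (g s) (g t) ≤ (L:ℝ) * (dist s t * ‖x‖) := h1
      _ = ((L * ‖x‖₊ : NNReal):ℝ) * dist s t := by
          push_cast
          ring
  have hgM : ∀ t : ℂ, g t ≤ M := fun t => (abs_le.mp (hM _)).2
  have hgsub : ∀ c : ℂ, ∀ r : ℝ, 0 < r → g c ≤ (1/(2*Real.pi)) *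
      ∫ θ in (0:ℝ)..(2*Real.pi), g (c + (r:ℂ) * Complex.exp ((θ:ℂ) * Complex.I)) := by
    intro c r hr
    have h1 := hpsh.2 (c • x) x r hr (fun t _ => Set.mem_univ _)
    have h2 : ∀ θ : ℝ, u (c • x + (((r:ℂ) * Complex.exp ((θ:ℂ) * Complex.I)) • x))
        = g (c + (r:ℂ) * Complex.exp ((θ:ℂ) * Complex.I)) := by
      intro θ
      rw [hgdef]
      simp only []
      rw [add_smul]
    calc g c = u (c • x) := rfl
      _ ≤ (1/(2*Real.pi)) *
          ∫ θ in (0:ℝ)..(2*Real.pi), u (c • x + (((r:ℂ) * Complex.exp ((θ:ℂ) * Complex.I)) • x)) := h1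
      _ = (1/(2*Real.pi)) *
          ∫ θ in (0:ℝ)..(2*Real.pi), g (c + (r:ℂ) * Complex.exp ((θ:ℂ) * Complex.I)) := by
          rw [intervalIntegral.integral_congr (fun θ _ => h2 θ)]
  have h01 : g 1 ≤ g 0 := line_le hgLip hgM hgsub 0 1
  have h10 : g 0 ≤ g 1 := line_le hgLip hgM hgsub 1 0
  have hx1 : g 1 = u x := by rw [hgdef]; simp
  have hx0 : g 0 = u 0 := by rw [hgdef]; simp
  rw [← hx1, ← hx0]
  exact le_antisymm h01 h10

/-- Dinew–Kołodziej Liouville theorem: a bounded plurisubharmonic function on `ℂⁿ` with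
bounded gradient which is maximal (satisfies the homogeneous complex Monge–Ampère
equation in the pluripotential sense) is constant. -/
theorem liouville_maximal_psh {n : ℕ} (u : (Fin n → ℂ) → ℝ)
    (hpsh : PshOn Set.univ u)
    (hbdd : ∃ M : ℝ, ∀ x, |u x| ≤ M)
    (hgrad : ∃ L : NNReal, LipschitzWith L u)
    (hmax : MaximalPsh u) :
    ∃ c : ℝ, ∀ x, u x = c :=
  liouville_maximal_psh' u hpsh hbdd hgrad hmax
end
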